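/- There exists a function det₂ of n+1 vectors in F₂ⁿ with values in F₂ such that: (a) det₂(k₁,...,k_{n+1}) = 0 whenever the rank of the collection k₁,...,k_{n+1} is less than n, and (b) if the vectors k₁,...,k_{n+1} have rank exactly n and satisfy a unique (up to scaling, but over F₂ unique) nontrivial linear relation λ¹k₁ + ... + λ^{n+1}k_{n+1} = 0, then det₂(k₁,...,k_{n+1}) = λ¹ + ... + λ^{n+1} + 1. -/

import Mathlib

/-! A tuple of `n + 1` vectors of rank `n` has a one-dimensional space of linear relations
(rank–nullity), and over `F₂` a line contains exactly one nonzero vector. So the nontrivial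
relation `λ` is determined by the tuple, and `det₂` can be defined by choosing it. -/

open Module

lemma finrank_ker_linearCombination_add_finrank_span {K V ι : Type*} [Field K] [AddCommGroup V]
    [Module K V] [Fintype ι] (k : ι → V) :
    finrank K (LinearMap.ker (Fintype.linearCombination K k)) +
      finrank K (Submodule.span K (Set.range k)) = Fintype.card ι := by
  rw [← Fintype.range_linearCombination, add_comm, LinearMap.finrank_range_add_finrank_ker,
    finrank_fintype_fun_eq_card]

lemma ZMod.two_eq_one_of_ne_zero {a : ZMod 2} (ha : a ≠ 0) : a = 1 := by
  revert a; decide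

lemma Submodule.eq_of_finrank_eq_one_zmod_two {V : Type*} [AddCommGroup V] [Module (ZMod 2) V]
    {W : Submodule (ZMod 2) V} (hW : finrank (ZMod 2) W = 1) {x y : V} (hx : x ∈ W) (hy : y ∈ W)
    (hx0 : x ≠ 0) (hy0 : y ≠ 0) : x = y := by
  obtain ⟨v, -, hv⟩ := finrank_eq_one_iff'.mp hW
  have eq_v : ∀ z ∈ W, z ≠ 0 → z = v := fun z hz hz0 => by
    obtain ⟨a, ha⟩ := hv ⟨z, hz⟩
    have ha : a • (v : V) = z := congrArg Subtype.val ha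
    rw [← ha, ZMod.two_eq_one_of_ne_zero (a := a) (by rintro rfl; simp_all), one_smul]
  rw [eq_v x hx hx0, eq_v y hy hy0]

section Relation

variable {ι V : Type*} [Fintype ι] [AddCommGroup V] [Module (ZMod 2) V]

lemma Fintype.linearCombination_eq_zero_unique_zmod_two {k : ι → V}
    (hk : finrank (ZMod 2) (Submodule.span (ZMod 2) (Set.range k)) + 1 = Fintype.card ι)
    {lam mu : ι → ZMod 2} (hlam : Fintype.linearCombination (ZMod 2) k lam = 0)
    (hmu : Fintype.linearCombination (ZMod 2) k mu = 0) (hlam0 : lam ≠ 0) (hmu0 : mu ≠ 0) :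
    lam = mu := by
  have hker := finrank_ker_linearCombination_add_finrank_span (K := ZMod 2) k
  exact Submodule.eq_of_finrank_eq_one_zmod_two (W := LinearMap.ker _) (by omega)
    hlam hmu hlam0 hmu0

noncomputable def nontrivialRelation (k : ι → V) : ι → ZMod 2 :=
  Classical.epsilon fun lam => lam ≠ 0 ∧ Fintype.linearCombination (ZMod 2) k lam = 0

lemma nontrivialRelation_eq {k : ι → V}
    (hk : finrank (ZMod 2) (Submodule.span (ZMod 2) (Set.range k)) + 1 = Fintype.card ι)
    {lam : ι → ZMod 2} (hlam : Fintype.linearCombination (ZMod 2) k lam = 0) (hlam0 : lam ≠ 0) :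
    nontrivialRelation k = lam :=
  have ⟨h0, hrel⟩ := Classical.epsilon_spec (p := fun lam => lam ≠ 0 ∧
    Fintype.linearCombination (ZMod 2) k lam = 0) ⟨lam, hlam0, hlam⟩
  Fintype.linearCombination_eq_zero_unique_zmod_two hk hrel hlam h0 hlam0

end Relation

lemma Fintype.linearCombination_eq_zero_iff_forall {R ι : Type*} [CommSemiring R] [Fintype ι]
    {m : Type*} (k : ι → m → R) (lam : ι → R) :
    Fintype.linearCombination R k lam = 0 ↔ ∀ j, ∑ i, lam i * k i j = 0 := by
  simp [funext_iff, Fintype.linearCombination_apply, Finset.sum_apply]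

noncomputable def det2 {n : ℕ} (k : Fin (n + 1) → Fin n → ZMod 2) : ZMod 2 :=
  if finrank (ZMod 2) (Submodule.span (ZMod 2) (Set.range k)) = n then
    ∑ i, nontrivialRelation k i + 1
  else 0

/-- Existence of the 2-determinant `det₂` of `n+1` vectors in `F₂ⁿ`:
it vanishes on tuples of rank `< n`, and on tuples of rank `n` with (unique) nonzero
relation `∑ λᵢ kᵢ = 0` it equals `∑ λᵢ + 1`. -/
theorem det2_exists (n : ℕ) :
    ∃ D : (Fin (n + 1) → Fin n → ZMod 2) → ZMod 2,
      (∀ k : Fin (n + 1) → Fin n → ZMod 2,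
        Module.finrank (ZMod 2) (Submodule.span (ZMod 2) (Set.range k)) < n → D k = 0) ∧
      (∀ (k : Fin (n + 1) → Fin n → ZMod 2) (lam : Fin (n + 1) → ZMod 2),
        Module.finrank (ZMod 2) (Submodule.span (ZMod 2) (Set.range k)) = n →
        lam ≠ 0 → (∀ j, ∑ i, lam i * k i j = 0) →
        D k = (∑ i, lam i) + 1) := by
  refine ⟨det2, fun k hk => if_neg hk.ne, fun k lam hk hlam0 hlam => ?_⟩
  rw [← Fintype.linearCombination_eq_zero_iff_forall] at hlam
  rw [det2, if_pos hk, nontrivialRelation_eq (by simp [hk]) hlam hlam0]
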